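/- arXiv:2402.16622 — 4 statements merged into one kernel-verified Lean document; each statement's English description precedes it below -/
import Mathlib

section
/- Let (w_n) ⊂ C([0,T];ℝ) with w_n(0)=0, w_n(t) = ∫₀ᵗ α_n(s) ds for α_n ∈ L¹(0,T;ℝ), C_α := sup_n ‖α_n‖_{L¹(0,T)} < ∞ and C_w := sup_n ‖w_n‖_{C([0,T])} < ∞. For δ > 0 and t ∈ [0,T], set t_δ := ⌊t/δ⌋·δ. Then for every n and δ, ∫₀ᵀ |w_n(t) − w_n(t_δ)|² dt ≤ δ C_w² + 4δ C_w C_α. -/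
open MeasureTheory Set

/-- Discretization estimate from the proof of Lemma 4.7. -/
theorem discretization_square_estimate
    (T δ Cα Cw : ℝ) (hT : 0 < T) (hδ : 0 < δ)
    (w α : ℝ → ℝ)
    (hα : IntegrableOn α (Icc 0 T))
    (hw : ∀ t ∈ Icc (0:ℝ) T, w t = ∫ s in (0:ℝ)..t, α s)
    (hCα : (∫ s in (0:ℝ)..T, |α s|) ≤ Cα)
    (hCw : ∀ t ∈ Icc (0:ℝ) T, |w t| ≤ Cw) :
    (∫ t in (0:ℝ)..T, (w t - w ((⌊t / δ⌋ : ℝ) * δ)) ^ 2)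
      ≤ δ * Cw ^ 2 + 4 * δ * Cw * Cα := by
  have hCw0 : 0 ≤ Cw := le_trans (abs_nonneg _) (hCw 0 ⟨le_refl 0, hT.le⟩)
  have hInt0 : (0:ℝ) ≤ ∫ s in (0:ℝ)..T, |α s| :=
    intervalIntegral.integral_nonneg hT.le fun s _ => abs_nonneg _
  have hCα0 : 0 ≤ Cα := le_trans hInt0 hCα
  set μ : Measure ℝ := volume.restrict (Ioc (0:ℝ) T) with hμ
  haveI : IsFiniteMeasure μ := ⟨by
    rw [hμ, Measure.restrict_apply_univ, Real.volume_Ioc]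
    exact ENNReal.ofReal_lt_top⟩
  -- basic floor facts
  have hfl_le : ∀ t : ℝ, 0 ≤ t → (⌊t / δ⌋ : ℝ) * δ ≤ t := by
    intro t ht
    have := Int.floor_le (t / δ)
    calc (⌊t / δ⌋ : ℝ) * δ ≤ (t / δ) * δ := by nlinarith
    _ = t := by field_simp
  have hfl_nonneg : ∀ t : ℝ, 0 ≤ t → 0 ≤ (⌊t / δ⌋ : ℝ) * δ := by
    intro t ht
    have h0 : (0:ℤ) ≤ ⌊t / δ⌋ := Int.floor_nonneg.2 (div_nonneg ht hδ.le)
    have : (0:ℝ) ≤ (⌊t / δ⌋ : ℝ) := by exact_mod_cast h0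
    positivity
  have hfl_gt : ∀ t : ℝ, t - δ < (⌊t / δ⌋ : ℝ) * δ := by
    intro t
    have h : t / δ - 1 < (⌊t / δ⌋ : ℝ) := Int.sub_one_lt_floor (t / δ)
    have h2 : (t / δ - 1) * δ < (⌊t / δ⌋ : ℝ) * δ := mul_lt_mul_of_pos_right h hδ
    have h3 : (t / δ - 1) * δ = t - δ := by field_simp
    linarith
  -- measurability of the floor map
  have hm : Measurable fun t : ℝ => (⌊t / δ⌋ : ℝ) * δ :=
    (measurable_from_top.comp (Int.measurable_floor.comp (measurable_id.div_const δ))).mul_const δ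
  set S : Set (ℝ × ℝ) := {p : ℝ × ℝ | (⌊p.1 / δ⌋ : ℝ) * δ < p.2 ∧ p.2 ≤ p.1} with hSdef
  have hS : MeasurableSet S := by
    apply MeasurableSet.inter
    · exact measurableSet_lt (hm.comp measurable_fst) measurable_snd
    · exact measurableSet_le measurable_snd measurable_fst
  set F : ℝ × ℝ → ℝ := S.indicator (fun p => |α p.2|) with hFdef
  have hαIoc : IntegrableOn (fun s => |α s|) (Ioc 0 T) :=
    (hα.mono_set Ioc_subset_Icc_self).abs
  have hαμ : Integrable (fun s => |α s|) μ := hαIoc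
  have hFmeas : AEStronglyMeasurable F (μ.prod μ) := by
    apply AEStronglyMeasurable.indicator _ hS
    exact (hαμ.aestronglyMeasurable.comp_quasiMeasurePreserving
      (Measure.quasiMeasurePreserving_snd))
  have hdom : Integrable (fun p : ℝ × ℝ => (1:ℝ) * |α p.2|) (μ.prod μ) :=
    Integrable.mul_prod (integrable_const 1) hαμ
  have hFint : Integrable F (μ.prod μ) := by
    apply Integrable.mono' hdom hFmeas
    filter_upwards with p
    rw [hFdef]
    by_cases hp : p ∈ S <;>
      simp [Set.indicator_of_mem, Set.indicator_of_notMem, hp, abs_nonneg]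
  -- interval integrability
  have hIIT : IntervalIntegrable α volume 0 T := by
    rw [intervalIntegrable_iff']
    exact hα.mono_set (uIcc_of_le hT.le).subset
  have hII : ∀ a b : ℝ, 0 ≤ a → a ≤ b → b ≤ T → IntervalIntegrable α volume a b := by
    intro a b ha hab hbT
    refine hIIT.mono_set ?_
    rw [uIcc_of_le hab, uIcc_of_le hT.le]
    exact Icc_subset_Icc ha hbT
  -- the inner integral identity
  have hinner : ∀ t ∈ Ioc (0:ℝ) T,
      (∫ s, F (t, s) ∂μ) = ∫ s in Ioc ((⌊t / δ⌋ : ℝ) * δ) t, |α s| := by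
    intro t ht
    have ha0 := hfl_nonneg t ht.1.le
    have hFt : (fun s => F (t, s)) = (Ioc ((⌊t / δ⌋ : ℝ) * δ) t).indicator
        (fun s => |α s|) := by
      funext s
      simp only [hFdef, hSdef, Set.indicator_apply, mem_setOf_eq, mem_Ioc]
    rw [hFt, integral_indicator measurableSet_Ioc, hμ,
      Measure.restrict_restrict measurableSet_Ioc,
      inter_eq_self_of_subset_left (Ioc_subset_Ioc ha0 ht.2)]
  -- pointwise bound on the square
  have key : ∀ t ∈ Ioc (0:ℝ) T,
      (w t - w ((⌊t / δ⌋ : ℝ) * δ)) ^ 2 ≤ 2 * Cw * ∫ s, F (t, s) ∂μ := by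
    intro t ht
    set a : ℝ := (⌊t / δ⌋ : ℝ) * δ with hadef
    have ha0 := hfl_nonneg t ht.1.le
    have hat := hfl_le t ht.1.le
    have haT : a ≤ T := hat.trans ht.2
    have hsub : w t - w a = ∫ s in a..t, α s := by
      rw [hw t ⟨ht.1.le, ht.2⟩, hw a ⟨ha0, haT⟩]
      exact intervalIntegral.integral_interval_sub_left
        (hII 0 t le_rfl ht.1.le ht.2) (hII 0 a le_rfl ha0 haT)
    have habs : |w t - w a| ≤ ∫ s in a..t, |α s| := by
      rw [hsub]
      exact intervalIntegral.abs_integral_le_integral_abs hat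
    have h2 : |w t - w a| ≤ 2 * Cw := by
      have h1 := hCw t ⟨ht.1.le, ht.2⟩
      have h2 := hCw a ⟨ha0, haT⟩
      calc |w t - w a| ≤ |w t| + |w a| := abs_sub _ _
        _ ≤ 2 * Cw := by linarith
    have hInonneg : (0:ℝ) ≤ ∫ s in a..t, |α s| :=
      intervalIntegral.integral_nonneg hat fun s _ => abs_nonneg _
    have hmain : (w t - w a) ^ 2 ≤ 2 * Cw * ∫ s in a..t, |α s| := by
      calc (w t - w a) ^ 2 = |w t - w a| * |w t - w a| := by
            rw [abs_mul_abs_self]; ring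
        _ ≤ (2 * Cw) * ∫ s in a..t, |α s| :=
            mul_le_mul h2 habs (abs_nonneg _) (by linarith)
    rw [hinner t ht, ← intervalIntegral.integral_of_le hat]
    exact hmain
  -- the double integral bound after swapping
  have houter : ∀ s : ℝ, (∫ t, F (t, s) ∂μ) ≤ δ * |α s| := by
    intro s
    set A : Set ℝ := {t : ℝ | (⌊t / δ⌋ : ℝ) * δ < s ∧ s ≤ t} with hAdef
    have hA : MeasurableSet A := by
      apply MeasurableSet.inter
      · exact measurableSet_lt hm measurable_const
      · exact measurableSet_le measurable_const measurable_id
    have hFs : (fun t => F (t, s)) = A.indicator (fun _ => |α s|) := by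
      funext t
      simp only [hFdef, hSdef, hAdef, Set.indicator_apply, mem_setOf_eq]
    have hAsub : A ⊆ Ico s (s + δ) := by
      intro t htA
      obtain ⟨h1, h2⟩ := htA
      refine ⟨h2, ?_⟩
      have := hfl_gt t
      linarith
    have hμA : (μ A).toReal ≤ δ := by
      have h1 : μ A ≤ volume A := Measure.restrict_le_self A
      have h2 : volume A ≤ volume (Ico s (s + δ)) := measure_mono hAsub
      have h3 : volume (Ico s (s + δ)) = ENNReal.ofReal δ := by
        rw [Real.volume_Ico]; ring_nf
      exact ENNReal.toReal_le_of_le_ofReal hδ.le (h3 ▸ h1.trans h2)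
    rw [hFs, integral_indicator_const _ hA]
    simp only [smul_eq_mul]
    exact mul_le_mul_of_nonneg_right hμA (abs_nonneg _) |>.trans_eq rfl
  -- put it together
  have hFint' : Integrable (Function.uncurry fun t s => F (t, s)) (μ.prod μ) := hFint
  have hswap := integral_integral_swap hFint'
  have hbound2 : (∫ s, (∫ t, F (t, s) ∂μ) ∂μ) ≤ δ * Cα := by
    have hmono : (∫ s, (∫ t, F (t, s) ∂μ) ∂μ) ≤ ∫ s, δ * |α s| ∂μ := by
      apply integral_mono_of_nonneg
      · filter_upwards with s
        apply integral_nonneg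
        intro t
        exact Set.indicator_nonneg (fun p _ => abs_nonneg _) _
      · exact hαμ.const_mul δ
      · filter_upwards with s using houter s
    have : (∫ s, δ * |α s| ∂μ) = δ * ∫ s in Ioc (0:ℝ) T, |α s| := by
      rw [hμ, integral_const_mul]
    rw [this] at hmono
    have heq : (∫ s in Ioc (0:ℝ) T, |α s|) = ∫ s in (0:ℝ)..T, |α s| :=
      (intervalIntegral.integral_of_le hT.le).symm
    rw [heq] at hmono
    calc (∫ s, (∫ t, F (t, s) ∂μ) ∂μ) ≤ δ * ∫ s in (0:ℝ)..T, |α s| := hmono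
      _ ≤ δ * Cα := mul_le_mul_of_nonneg_left hCα hδ.le
  have hbound1 : (∫ t in (0:ℝ)..T, (w t - w ((⌊t / δ⌋ : ℝ) * δ)) ^ 2)
      ≤ 2 * Cw * ∫ t, (∫ s, F (t, s) ∂μ) ∂μ := by
    rw [intervalIntegral.integral_of_le hT.le]
    have hmono : (∫ t in Ioc (0:ℝ) T, (w t - w ((⌊t / δ⌋ : ℝ) * δ)) ^ 2)
        ≤ ∫ t, 2 * Cw * (∫ s, F (t, s) ∂μ) ∂μ := by
      apply integral_mono_of_nonneg
      · filter_upwards with t using sq_nonneg _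
      · exact (hFint'.integral_prod_left).const_mul _
      · exact (ae_restrict_iff' measurableSet_Ioc).mpr
          (Filter.Eventually.of_forall fun t ht => key t ht)
    rw [integral_const_mul] at hmono
    exact hmono
  have hfinal : (∫ t in (0:ℝ)..T, (w t - w ((⌊t / δ⌋ : ℝ) * δ)) ^ 2)
      ≤ 2 * Cw * (δ * Cα) := by
    calc (∫ t in (0:ℝ)..T, (w t - w ((⌊t / δ⌋ : ℝ) * δ)) ^ 2)
        ≤ 2 * Cw * ∫ t, (∫ s, F (t, s) ∂μ) ∂μ := hbound1
      _ = 2 * Cw * ∫ s, (∫ t, F (t, s) ∂μ) ∂μ := by rw [hswap]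
      _ ≤ 2 * Cw * (δ * Cα) :=
          mul_le_mul_of_nonneg_left hbound2 (by linarith)
  nlinarith [mul_nonneg (mul_nonneg hδ.le hCw0) hCα0, sq_nonneg Cw,
    mul_nonneg hδ.le (sq_nonneg Cw)]
end

section
/- Let (w_n) ⊂ C([0,T];ℝ) with w_n(t) = ∫₀ᵗ α_n(s) ds, sup_n ‖α_n‖_{L¹(0,T)} < ∞ and sup_n ‖w_n‖_{C([0,T])} < ∞, and let (ψ_n) ⊂ L²(0,T;ℝ) with ψ_n → 0 weakly in L²(0,T). Then for every D ∈ B([0,T]), lim_{n→∞} sup_{t∈[0,T]} |∫₀ᵗ 1_D(s) ψ_n(s) w_n(s) ds| = 0. -/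
open MeasureTheory Set Filter Topology
open scoped ENNReal NNReal

/-- Scalar case of Lemma 4.7: uniform-in-time convergence of the integrals
`∫₀ᵗ 1_D ψ_n w_n` when `ψ_n → 0` weakly in `L²(0,T)`. -/
theorem weak_convergence_scalar_lemma
    (T : ℝ) (hT : 0 < T)
    (w α ψ : ℕ → ℝ → ℝ) (Cα Cw : ℝ)
    (hα : ∀ n, IntegrableOn (α n) (Icc 0 T))
    (hw : ∀ n, ∀ t ∈ Icc (0:ℝ) T, w n t = ∫ s in (0:ℝ)..t, α n s)
    (hCα : ∀ n, (∫ s in (0:ℝ)..T, |α n s|) ≤ Cα)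
    (hCw : ∀ n, ∀ t ∈ Icc (0:ℝ) T, |w n t| ≤ Cw)
    (hψm : ∀ n, AEStronglyMeasurable (ψ n) (volume.restrict (Icc 0 T)))
    (hψ2 : ∀ n, IntegrableOn (fun s => (ψ n s) ^ 2) (Icc 0 T))
    (hweak : ∀ φ : ℝ → ℝ, AEStronglyMeasurable φ (volume.restrict (Icc 0 T)) →
      IntegrableOn (fun s => (φ s) ^ 2) (Icc 0 T) →
      Tendsto (fun n => ∫ s in (0:ℝ)..T, ψ n s * φ s) atTop (𝓝 0))
    (D : Set ℝ) (hD : MeasurableSet D) :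
    Tendsto (fun n => ⨆ t ∈ Icc (0:ℝ) T,
        |(∫ s in (0:ℝ)..t, D.indicator (fun _ => (1:ℝ)) s * ψ n s * w n s)|)
      atTop (𝓝 0) := by
  classical
  set μ : Measure ℝ := volume.restrict (Icc 0 T) with hμdef
  haveI : Fact ((1:ℝ≥0∞) ≤ 2) := ⟨one_le_two⟩
  haveI : IsFiniteMeasure μ := by
    constructor
    rw [hμdef, Measure.restrict_apply_univ, Real.volume_Icc]
    exact ENNReal.ofReal_lt_top
  -- Cα is nonnegative
  have hCα0 : 0 ≤ Cα :=
    le_trans (intervalIntegral.integral_nonneg hT.le (fun s _ => abs_nonneg _)) (hCα 0)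
  -- membership in L²
  have hmemψ : ∀ n, MemLp (ψ n) 2 μ := fun n =>
    (memLp_two_iff_integrable_sq (hψm n)).mpr (hψ2 n)
  set ψL : ℕ → Lp ℝ 2 μ := fun n => (hmemψ n).toLp (ψ n) with hψLdef
  -- the indicator integrand is integrable
  have hInt_h : ∀ n, Integrable (D.indicator (ψ n)) μ := by
    intro n
    exact memLp_one_iff_integrable.mp
      (((hmemψ n).indicator hD).mono_exponent one_le_two)
  have hIntOn : ∀ n, IntegrableOn (D.indicator (ψ n)) (Icc 0 T) := fun n => hInt_h n
  -- key computation A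
  have haveA : ∀ n (E : Set ℝ), MeasurableSet E → E ⊆ Icc 0 T →
      ∫ x, ψ n x * E.indicator (fun _ => (1:ℝ)) x ∂μ = ∫ x in E, ψ n x := by
    intro n E hE hEsub
    have h1 : (fun x => ψ n x * E.indicator (fun _ => (1:ℝ)) x)
        = E.indicator (fun x => ψ n x * 1) := by
      funext x; rw [Set.indicator_mul_right]
    rw [h1, integral_indicator hE, hμdef, Measure.restrict_restrict hE,
      Set.inter_eq_left.mpr hEsub]
    simp
  -- inner product representation against arbitrary L² elements
  have hInnerGen : ∀ n (f : Lp ℝ 2 μ),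
      (inner ℝ (ψL n) f : ℝ) = ∫ x, ψ n x * (f : ℝ → ℝ) x ∂μ := by
    intro n f
    rw [L2.inner_def]
    apply integral_congr_ae
    filter_upwards [(hmemψ n).coeFn_toLp] with x hx
    simp [hψLdef, hx, RCLike.inner_apply, mul_comm]
  -- relation between the interval integral pairing and μ-integrals
  have hIoc_sub : ∀ {u : ℝ}, u ≤ T → Ioc (0:ℝ) u ⊆ Icc 0 T := by
    intro u hu s hs
    exact ⟨hs.1.le, hs.2.trans hu⟩
  have hpairμ : ∀ n (f : ℝ → ℝ),
      ∫ s in (0:ℝ)..T, ψ n s * f s = ∫ x, ψ n x * f x ∂μ := by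
    intro n f
    rw [intervalIntegral.integral_of_le hT.le, hμdef, ← integral_Icc_eq_integral_Ioc]
  -- weak convergence of the pairings with L² elements
  have hptLp : ∀ f : Lp ℝ 2 μ,
      Tendsto (fun n => (inner ℝ (ψL n) f : ℝ)) atTop (𝓝 0) := by
    intro f
    have hm : AEStronglyMeasurable (f : ℝ → ℝ) μ := Lp.aestronglyMeasurable f
    have hsq : IntegrableOn (fun s => ((f : ℝ → ℝ) s) ^ 2) (Icc 0 T) :=
      (memLp_two_iff_integrable_sq hm).mp (Lp.memLp f)
    have h := hweak _ hm hsq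
    refine Tendsto.congr (fun n => ?_) h
    rw [hpairμ n, hInnerGen n f]
  -- Banach–Steinhaus: uniform L² bound
  obtain ⟨C, hC0, hCψ⟩ : ∃ C, 0 ≤ C ∧ ∀ n, ‖ψL n‖ ≤ C := by
    have hbdd : ∀ f : Lp ℝ 2 μ, ∃ c, ∀ n, ‖(innerSL ℝ (ψL n)) f‖ ≤ c := by
      intro f
      have h1 : Tendsto (fun n => |(inner ℝ (ψL n) f : ℝ)|) atTop (𝓝 |0|) :=
        (hptLp f).abs
      rw [abs_zero] at h1
      obtain ⟨c, hc⟩ := h1.bddAbove_range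
      exact ⟨c, fun n => by simpa [Real.norm_eq_abs] using hc ⟨n, rfl⟩⟩
    obtain ⟨C₀, hC₀⟩ := banach_steinhaus hbdd
    refine ⟨max C₀ 0, le_max_right _ _, fun n => ?_⟩
    have h2 := hC₀ n
    rw [innerSL_apply_norm] at h2
    exact h2.trans (le_max_left _ _)
  -- the running integrals Ψ
  set Ψ : ℕ → ℝ → ℝ := fun n u => ∫ s in Ioc (0:ℝ) u, D.indicator (ψ n) s with hΨdef
  -- the difference of Ψ values is an integral over Ioc a b
  have hsplit : ∀ n (a b : ℝ), 0 ≤ a → a ≤ b → b ≤ T →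
      Ψ n b - Ψ n a = ∫ s in Ioc a b, D.indicator (ψ n) s := by
    intro n a b ha hab hbT
    have h1 : Ioc 0 a ∪ Ioc a b = Ioc 0 b := Ioc_union_Ioc_eq_Ioc ha hab
    have h2 : Ψ n b = Ψ n a + ∫ s in Ioc a b, D.indicator (ψ n) s := by
      simp only [hΨdef]
      rw [← h1, setIntegral_union (Ioc_disjoint_Ioc_of_le le_rfl) measurableSet_Ioc
        ((hIntOn n).mono_set (fun s hs => ⟨hs.1.le, hs.2.trans (hab.trans hbT)⟩))
        ((hIntOn n).mono_set (fun s hs => ⟨ha.trans hs.1.le, hs.2.trans hbT⟩))]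
    linarith
  -- equicontinuity estimate
  have hequi : ∀ n (a b : ℝ), 0 ≤ a → a ≤ b → b ≤ T →
      |∫ s in Ioc a b, D.indicator (ψ n) s| ≤ C * Real.sqrt (b - a) := by
    intro n a b ha hab hbT
    set E : Set ℝ := D ∩ Ioc a b with hEdef
    have hE : MeasurableSet E := hD.inter measurableSet_Ioc
    have hEsub : E ⊆ Icc 0 T := fun x hx => ⟨ha.trans hx.2.1.le, hx.2.2.trans hbT⟩
    have hmemχ : MemLp (E.indicator fun _ => (1:ℝ)) 2 μ :=
      memLp_indicator_const 2 hE 1 (Or.inr (measure_ne_top μ E))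
    set χL : Lp ℝ 2 μ := hmemχ.toLp _ with hχdef
    have h1 : ∫ s in Ioc a b, D.indicator (ψ n) s = (inner ℝ (ψL n) χL : ℝ) := by
      have h2 : (inner ℝ (ψL n) χL : ℝ) = ∫ x, ψ n x * (χL : ℝ → ℝ) x ∂μ := hInnerGen n χL
      have h3 : ∫ x, ψ n x * (χL : ℝ → ℝ) x ∂μ
          = ∫ x, ψ n x * E.indicator (fun _ => (1:ℝ)) x ∂μ := by
        apply integral_congr_ae
        filter_upwards [hmemχ.coeFn_toLp] with x hx
        rw [hx]
      rw [setIntegral_indicator hD, h2, h3, haveA n E hE hEsub, hEdef,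
        Set.inter_comm]
    have hnormχ : ‖χL‖ ≤ Real.sqrt (b - a) := by
      rw [hχdef, Lp.norm_toLp, eLpNorm_indicator_const hE two_ne_zero ENNReal.ofNat_ne_top]
      have hμE : μ E ≤ ENNReal.ofReal (b - a) := by
        rw [hμdef, Measure.restrict_apply hE]
        calc volume (E ∩ Icc 0 T) ≤ volume (Ioc a b) :=
            measure_mono (fun x hx => hx.1.2)
          _ = ENNReal.ofReal (b - a) := Real.volume_Ioc
      have h5 : (1 / (2:ℝ≥0∞).toReal) = (1/2 : ℝ) := by norm_num
      simp only [nnnorm_one, enorm_one, ENNReal.coe_one, one_mul, h5]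
      rw [← ENNReal.toReal_rpow, Real.sqrt_eq_rpow]
      apply Real.rpow_le_rpow ENNReal.toReal_nonneg _ (by norm_num)
      calc (μ E).toReal ≤ (ENNReal.ofReal (b - a)).toReal :=
          ENNReal.toReal_mono ENNReal.ofReal_ne_top hμE
        _ = b - a := ENNReal.toReal_ofReal (by linarith)
    rw [h1, ← Real.norm_eq_abs]
    calc ‖(inner ℝ (ψL n) χL : ℝ)‖ ≤ ‖ψL n‖ * ‖χL‖ := norm_inner_le_norm _ _
      _ ≤ C * Real.sqrt (b - a) :=
        mul_le_mul (hCψ n) hnormχ (norm_nonneg _) hC0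
  -- pointwise convergence of Ψ
  have hptw : ∀ u, 0 ≤ u → u ≤ T → Tendsto (fun n => Ψ n u) atTop (𝓝 0) := by
    intro u hu huT
    set E : Set ℝ := D ∩ Ioc 0 u with hEdef
    have hE : MeasurableSet E := hD.inter measurableSet_Ioc
    have hEsub : E ⊆ Icc 0 T := fun x hx => ⟨hx.2.1.le, hx.2.2.trans huT⟩
    have hφm : AEStronglyMeasurable (E.indicator fun _ => (1:ℝ)) μ :=
      (stronglyMeasurable_const.indicator hE).aestronglyMeasurable
    have hφsq : IntegrableOn (fun s => (E.indicator (fun _ => (1:ℝ)) s) ^ 2) (Icc 0 T) := by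
      have h0 : (fun s => (E.indicator (fun _ => (1:ℝ)) s) ^ 2)
          = E.indicator fun _ => (1:ℝ) := by
        funext s; by_cases hs : s ∈ E <;> simp [hs]
      rw [h0]
      exact (integrable_const (1:ℝ)).indicator hE
    have h := hweak _ hφm hφsq
    refine Tendsto.congr (fun n => ?_) h
    rw [hpairμ, haveA n E hE hEsub]
    simp only [hΨdef]
    rw [setIntegral_indicator hD, hEdef, Set.inter_comm]
  -- uniform smallness of Ψ
  have hunif : ∀ ε : ℝ, 0 < ε → ∀ᶠ n in atTop, ∀ u ∈ Icc (0:ℝ) T, |Ψ n u| ≤ ε := by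
    intro ε hε
    set θ : ℝ := ε / (2 * (C + 1)) with hθdef
    have hC1 : (0:ℝ) < C + 1 := by linarith
    have hθpos : 0 < θ := div_pos hε (by linarith)
    set δ : ℝ := θ ^ 2 with hδdef
    have hδpos : 0 < δ := by positivity
    set K : ℕ := ⌈T / δ⌉₊ with hKdef
    have hgrid : ∀ᶠ n in atTop, ∀ k ∈ Finset.range (K + 1),
        |Ψ n (min ((k:ℝ) * δ) T)| ≤ ε / 2 := by
      rw [eventually_all_finset]
      intro k _
      have hmem1 : 0 ≤ min ((k:ℝ) * δ) T := le_min (by positivity) hT.le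
      have hmem2 : min ((k:ℝ) * δ) T ≤ T := min_le_right _ _
      have h1 : Tendsto (fun n => |Ψ n (min ((k:ℝ) * δ) T)|) atTop (𝓝 |0|) :=
        (hptw _ hmem1 hmem2).abs
      rw [abs_zero] at h1
      exact (h1.eventually_lt_const (by linarith)).mono fun n hn => hn.le
    refine hgrid.mono fun n hn u hu => ?_
    set k : ℕ := ⌊u / δ⌋₊ with hkdef
    have hk1 : (k:ℝ) * δ ≤ u := by
      rw [← le_div_iff₀ hδpos]
      exact Nat.floor_le (div_nonneg hu.1 hδpos.le)
    have hk2 : u < ((k:ℝ) + 1) * δ := by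
      rw [← div_lt_iff₀ hδpos]
      exact Nat.lt_floor_add_one _
    have hkK : k ∈ Finset.range (K + 1) := by
      rw [Finset.mem_range, Nat.lt_succ_iff, hkdef, hKdef]
      exact le_trans (Nat.floor_mono (by gcongr; exact hu.2)) (Nat.floor_le_ceil _)
    have hmin : min ((k:ℝ) * δ) T = (k:ℝ) * δ := min_eq_left (hk1.trans hu.2)
    have hgb := hn k hkK
    rw [hmin] at hgb
    have hkδ0 : (0:ℝ) ≤ (k:ℝ) * δ := mul_nonneg (Nat.cast_nonneg k) hδpos.le
    have hdiff := hequi n ((k:ℝ) * δ) u hkδ0 hk1 hu.2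
    rw [← hsplit n _ _ hkδ0 hk1 hu.2] at hdiff
    have hsq : Real.sqrt (u - (k:ℝ) * δ) ≤ θ := by
      have h2 : u - (k:ℝ) * δ ≤ θ ^ 2 := by nlinarith
      calc Real.sqrt (u - (k:ℝ) * δ) ≤ Real.sqrt (θ ^ 2) := Real.sqrt_le_sqrt h2
        _ = θ := Real.sqrt_sq hθpos.le
    have hCθ : C * θ ≤ ε / 2 := by
      have key : θ * (2 * (C + 1)) = ε := div_mul_cancel₀ _ (by linarith)
      nlinarith [hθpos.le]
    have habs : |Ψ n u| ≤ |Ψ n ((k:ℝ) * δ)| + |Ψ n u - Ψ n ((k:ℝ) * δ)| := by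
      have h4 := abs_add_le (Ψ n ((k:ℝ) * δ)) (Ψ n u - Ψ n ((k:ℝ) * δ))
      have h5 : Ψ n ((k:ℝ) * δ) + (Ψ n u - Ψ n ((k:ℝ) * δ)) = Ψ n u := by ring
      rwa [h5] at h4
    have h6 : C * Real.sqrt (u - (k:ℝ) * δ) ≤ C * θ :=
      mul_le_mul_of_nonneg_left hsq hC0
    linarith
  -- the Fubini bound on the target integrals
  have hfub : ∀ n (ε' : ℝ), 0 ≤ ε' → (∀ u ∈ Icc (0:ℝ) T, |Ψ n u| ≤ ε') →
      ∀ t ∈ Icc (0:ℝ) T,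
        |∫ s in (0:ℝ)..t, D.indicator (fun _ => (1:ℝ)) s * ψ n s * w n s|
          ≤ 2 * Cα * ε' := by
    intro n ε' hε' hub t ht
    have ht0 : (0:ℝ) ≤ t := ht.1
    have htT : t ≤ T := ht.2
    set g : ℝ → ℝ := D.indicator (ψ n) with hgdef
    have hgInt : IntegrableOn g (Ioc 0 t) := (hIntOn n).mono_set (hIoc_sub htT)
    have hαInt : IntegrableOn (α n) (Ioc 0 t) := (hα n).mono_set (hIoc_sub htT)
    -- step 1: rewrite as iterated integral
    have hstep1 : ∫ s in (0:ℝ)..t, D.indicator (fun _ => (1:ℝ)) s * ψ n s * w n s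
        = ∫ s in Ioc (0:ℝ) t, g s * ∫ y in Ioc (0:ℝ) t, (Ioc (0:ℝ) s).indicator (α n) y := by
      rw [intervalIntegral.integral_of_le ht0]
      apply setIntegral_congr_fun measurableSet_Ioc
      intro s hs
      have h1 : D.indicator (fun _ => (1:ℝ)) s * ψ n s = g s := by
        rw [hgdef]; by_cases hsD : s ∈ D <;> simp [hsD]
      have h2 : w n s = ∫ y in Ioc (0:ℝ) t, (Ioc (0:ℝ) s).indicator (α n) y := by
        rw [hw n s ⟨hs.1.le, hs.2.trans htT⟩, intervalIntegral.integral_of_le hs.1.le,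
          setIntegral_indicator measurableSet_Ioc,
          Set.inter_eq_right.mpr (Ioc_subset_Ioc_right hs.2)]
      simp only
      rw [h1, h2]
    set ν : Measure ℝ := volume.restrict (Ioc 0 t) with hνdef
    set S : Set (ℝ × ℝ) := {p : ℝ × ℝ | 0 < p.2 ∧ p.2 ≤ p.1} with hSdef
    have hS : MeasurableSet S :=
      (measurableSet_lt measurable_const measurable_snd).inter
        (measurableSet_le measurable_snd measurable_fst)
    have hdom : Integrable (fun z : ℝ × ℝ => g z.1 * α n z.2) (ν.prod ν) :=
      Integrable.mul_prod hgInt hαInt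
    have hFeq : ∀ z : ℝ × ℝ, (Ioc (0:ℝ) z.1).indicator (α n) z.2
        = α n z.2 * S.indicator (fun _ => (1:ℝ)) z := by
      intro z
      by_cases hz : 0 < z.2 ∧ z.2 ≤ z.1
      · rw [Set.indicator_of_mem (Set.mem_Ioc.mpr hz), Set.indicator_of_mem (show z ∈ S from hz), mul_one]
      · rw [Set.indicator_of_notMem (fun h => hz (Set.mem_Ioc.mp h)),
          Set.indicator_of_notMem (show z ∉ S from hz), mul_zero]
    have hFmeas : AEStronglyMeasurable
        (Function.uncurry fun s y => g s * (Ioc (0:ℝ) s).indicator (α n) y) (ν.prod ν) := by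
      have h1 : AEStronglyMeasurable (fun z : ℝ × ℝ => g z.1 * α n z.2) (ν.prod ν) :=
        hdom.aestronglyMeasurable
      have hind : AEStronglyMeasurable (S.indicator (fun _ => (1:ℝ))) (ν.prod ν) :=
        (stronglyMeasurable_const.indicator hS).aestronglyMeasurable
      have h2 := h1.mul hind
      refine h2.congr (Eventually.of_forall fun z => ?_)
      simp only [Function.uncurry, Pi.mul_apply]
      rw [hFeq z]; ring
    have hFint : Integrable
        (Function.uncurry fun s y => g s * (Ioc (0:ℝ) s).indicator (α n) y) (ν.prod ν) := by
      refine hdom.norm.mono' hFmeas (Eventually.of_forall fun z => ?_)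
      simp only [Function.uncurry, norm_norm]
      rw [norm_mul, norm_mul]
      exact mul_le_mul_of_nonneg_left (norm_indicator_le_norm_self _ _) (norm_nonneg _)
    have hswap : ∫ s in Ioc (0:ℝ) t, ∫ y in Ioc (0:ℝ) t,
          g s * (Ioc (0:ℝ) s).indicator (α n) y
        = ∫ y in Ioc (0:ℝ) t, ∫ s in Ioc (0:ℝ) t,
          g s * (Ioc (0:ℝ) s).indicator (α n) y :=
      integral_integral_swap hFint
    have hinner : ∀ y ∈ Ioc (0:ℝ) t,
        ∫ s in Ioc (0:ℝ) t, g s * (Ioc (0:ℝ) s).indicator (α n) y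
          = (Ψ n t - Ψ n y) * α n y := by
      intro y hy
      have h1 : ∀ s : ℝ, g s * (Ioc (0:ℝ) s).indicator (α n) y
          = (Ici y).indicator (fun s' => g s' * α n y) s := by
        intro s
        by_cases hys : y ≤ s
        · rw [Set.indicator_of_mem (mem_Ici.mpr hys),
            Set.indicator_of_mem (Set.mem_Ioc.mpr ⟨hy.1, hys⟩)]
        · rw [Set.indicator_of_notMem (fun h => hys (mem_Ici.mp h)),
            Set.indicator_of_notMem (fun h => hys (Set.mem_Ioc.mp h).2), mul_zero]
      simp_rw [h1]
      rw [setIntegral_indicator measurableSet_Ici]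
      have h2 : Ioc (0:ℝ) t ∩ Ici y = Icc y t := by
        ext s
        simp only [Set.mem_inter_iff, Set.mem_Ioc, Set.mem_Ici, Set.mem_Icc]
        constructor
        · rintro ⟨⟨_, hst⟩, hys⟩; exact ⟨hys, hst⟩
        · rintro ⟨hys, hst⟩; exact ⟨⟨lt_of_lt_of_le hy.1 hys, hst⟩, hys⟩
      rw [h2, integral_Icc_eq_integral_Ioc, integral_mul_const,
        ← hsplit n y t hy.1.le hy.2 htT]
    have hmain : ∫ s in (0:ℝ)..t, D.indicator (fun _ => (1:ℝ)) s * ψ n s * w n s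
        = ∫ y in Ioc (0:ℝ) t, (Ψ n t - Ψ n y) * α n y := by
      rw [hstep1]
      have h3 : ∀ s : ℝ, g s * (∫ y in Ioc (0:ℝ) t, (Ioc (0:ℝ) s).indicator (α n) y)
          = ∫ y in Ioc (0:ℝ) t, g s * (Ioc (0:ℝ) s).indicator (α n) y :=
        fun s => (integral_const_mul _ _).symm
      refine (setIntegral_congr_fun measurableSet_Ioc (fun s _ => h3 s)).trans ?_
      rw [hswap]
      exact setIntegral_congr_fun measurableSet_Ioc hinner
    rw [hmain, ← Real.norm_eq_abs]
    have hbound : ‖∫ y in Ioc (0:ℝ) t, (Ψ n t - Ψ n y) * α n y‖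
        ≤ ∫ y in Ioc (0:ℝ) t, 2 * ε' * |α n y| := by
      refine norm_integral_le_of_norm_le ((hαInt.abs).const_mul _) ?_
      filter_upwards [ae_restrict_mem measurableSet_Ioc] with y hy
      rw [Real.norm_eq_abs, abs_mul]
      have h1 : |Ψ n t - Ψ n y| ≤ 2 * ε' := by
        have h2 := hub t ht
        have h3 := hub y ⟨hy.1.le, hy.2.trans htT⟩
        calc |Ψ n t - Ψ n y| = |Ψ n t + -(Ψ n y)| := by ring_nf
          _ ≤ |Ψ n t| + |-(Ψ n y)| := abs_add_le _ _
          _ = |Ψ n t| + |Ψ n y| := by rw [abs_neg]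
          _ ≤ 2 * ε' := by linarith
      exact mul_le_mul_of_nonneg_right h1 (abs_nonneg _)
    refine hbound.trans ?_
    rw [integral_const_mul]
    have h4 : ∫ y in Ioc (0:ℝ) t, |α n y| ≤ Cα := by
      have h5 : ∫ y in Ioc (0:ℝ) t, |α n y| ≤ ∫ y in Ioc (0:ℝ) T, |α n y| :=
        setIntegral_mono_set ((show IntegrableOn (fun y => |α n y|) (Icc 0 T) volume from (hα n).abs).mono_set Ioc_subset_Icc_self)
          (Eventually.of_forall fun y => abs_nonneg _)
          (HasSubset.Subset.eventuallyLE (Ioc_subset_Ioc_right htT))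
      have h6 : ∫ y in Ioc (0:ℝ) T, |α n y| ≤ Cα := by
        rw [← intervalIntegral.integral_of_le hT.le]; exact hCα n
      linarith
    calc 2 * ε' * ∫ y in Ioc (0:ℝ) t, |α n y| ≤ 2 * ε' * Cα :=
        mul_le_mul_of_nonneg_left h4 (by linarith)
      _ = 2 * Cα * ε' := by ring
  -- final assembly
  rw [Metric.tendsto_atTop]
  intro ε hε
  have hε4 : 0 < ε / (4 * (Cα + 1)) := by positivity
  obtain ⟨N, hN⟩ := eventually_atTop.mp (hunif _ hε4)
  refine ⟨N, fun n hn => ?_⟩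
  have hub := hN n hn
  have hhalf : 2 * Cα * (ε / (4 * (Cα + 1))) ≤ ε / 2 := by
    have key : (ε / (4 * (Cα + 1))) * (4 * (Cα + 1)) = ε := div_mul_cancel₀ _ (by linarith)
    nlinarith [hε4.le]
  have hIb : ∀ t ∈ Icc (0:ℝ) T,
      |∫ s in (0:ℝ)..t, D.indicator (fun _ => (1:ℝ)) s * ψ n s * w n s| ≤ ε / 2 :=
    fun t htmem => (hfub n _ hε4.le hub t htmem).trans hhalf
  rw [Real.dist_eq, sub_zero]
  have hF0 : 0 ≤ ⨆ t ∈ Icc (0:ℝ) T,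
      |∫ s in (0:ℝ)..t, D.indicator (fun _ => (1:ℝ)) s * ψ n s * w n s| :=
    Real.iSup_nonneg fun t => Real.iSup_nonneg fun _ => abs_nonneg _
  rw [abs_of_nonneg hF0]
  have hFle : (⨆ t ∈ Icc (0:ℝ) T,
      |∫ s in (0:ℝ)..t, D.indicator (fun _ => (1:ℝ)) s * ψ n s * w n s|) ≤ ε / 2 := by
    refine Real.iSup_le (fun t => Real.iSup_le (fun htmem => hIb t htmem) (by linarith))
      (by linarith)
  linarith
end

section
/- Under the critical variational setting with subcriticality (2β_j − 1)(ρ_j + 1) ≤ 1 and the pointwise growth bound ‖F(t,u)‖_{V*} ≤ C_{n,T} Σ_j (1 + ‖u‖_{β_j}^{ρ_j+1}) for ‖u‖_H ≤ n, together with the interpolation estimate ‖v‖_{β} ≤ K‖v‖_H^{2−2β}‖v‖_V^{2β−1}: there exists a constant C̃_{n,T} non-decreasing in T such that for all u ∈ MR(0,T) with ‖u‖_{C([0,T];H)} ≤ n, ‖F(u)‖_{L²(0,T;V*)} ≤ C̃_{n,T}(1 + ‖u‖_{L²(0,T;V)}). -/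
open MeasureTheory Set

/-- Lemma 3.4(iv) of the paper: the `L²`-growth estimate
`‖F(u)‖_{L²(0,T;V*)} ≤ C̃_{n,T}(1 + ‖u‖_{L²(0,T;V)})` for the semilinear part
`F`, under subcriticality and the interpolation estimate.  The interpolation
norms `‖·‖_{β_j}` are encoded by functions `nβ j : V → ℝ`. -/
theorem F_growth_L2_estimate
    {V H Vs : Type*}
    [NormedAddCommGroup V] [NormedSpace ℝ V]
    [NormedAddCommGroup H] [NormedSpace ℝ H]
    [NormedAddCommGroup Vs] [NormedSpace ℝ Vs]
    (iVH : V →L[ℝ] H)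
    (m : ℕ) (β ρ : Fin m → ℝ) (K : ℝ) (hK : 0 < K)
    (hβ : ∀ j, β j ∈ Ioo (1/2 : ℝ) 1) (hρ : ∀ j, 0 ≤ ρ j)
    (hsub : ∀ j, (2 * β j - 1) * (ρ j + 1) ≤ 1)
    (nβ : Fin m → V → ℝ) (hnβ0 : ∀ j v, 0 ≤ nβ j v)
    (hinterp : ∀ j (v : V),
      nβ j v ≤ K * ‖iVH v‖ ^ (2 - 2 * β j) * ‖v‖ ^ (2 * β j - 1))
    (F : ℝ → V → Vs) (n : ℝ) (hn : 0 ≤ n)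
    (C : ℝ → ℝ) (hC0 : ∀ T : ℝ, 0 < T → 0 ≤ C T) (hCmono : MonotoneOn C (Ioi 0))
    (hgrowth : ∀ T : ℝ, 0 < T → ∀ t ∈ Icc (0:ℝ) T, ∀ v : V, ‖iVH v‖ ≤ n →
      ‖F t v‖ ≤ C T * ∑ j, (1 + nβ j v ^ (ρ j + 1))) :
    ∃ Ct : ℝ → ℝ, MonotoneOn Ct (Ioi 0) ∧
      ∀ T : ℝ, 0 < T → ∀ u : ℝ → V,
        ContinuousOn (fun t => iVH (u t)) (Icc 0 T) →
        (∀ t ∈ Icc (0:ℝ) T, ‖iVH (u t)‖ ≤ n) →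
        AEStronglyMeasurable u (volume.restrict (Ioc 0 T)) →
        IntegrableOn (fun t => ‖u t‖ ^ 2) (Ioc 0 T) →
        AEStronglyMeasurable (fun t => F t (u t)) (volume.restrict (Ioc 0 T)) →
        IntegrableOn (fun t => ‖F t (u t)‖ ^ 2) (Ioc 0 T) ∧
        (∫ t in (0:ℝ)..T, ‖F t (u t)‖ ^ 2) ^ (1/2 : ℝ)
          ≤ Ct T * (1 + (∫ t in (0:ℝ)..T, ‖u t‖ ^ 2) ^ (1/2 : ℝ)) := by
  -- auxiliary: a^θ ≤ 1 + a for 0 ≤ θ ≤ 1, 0 ≤ a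
  have haux : ∀ a θ : ℝ, 0 ≤ a → 0 ≤ θ → θ ≤ 1 → a ^ θ ≤ 1 + a := by
    intro a θ ha hθ0 hθ1
    rcases le_or_gt a 1 with h | h
    · have := Real.rpow_le_one ha h hθ0
      linarith
    · have := Real.rpow_le_rpow_of_exponent_le h.le hθ1
      rw [Real.rpow_one] at this
      linarith
  set S : ℝ := ∑ j, (1 + (K * (1 + n)) ^ (ρ j + 1)) with hS
  have hKn : (0:ℝ) ≤ K * (1 + n) := by positivity
  have hMj : ∀ j : Fin m, 0 ≤ (K * (1 + n)) ^ (ρ j + 1) :=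
    fun j => Real.rpow_nonneg hKn _
  have hS0 : 0 ≤ S :=
    Finset.sum_nonneg fun j _ => by have := hMj j; linarith
  set c : ℝ → ℝ := fun T => C T * S with hc
  have hc0 : ∀ T, 0 < T → 0 ≤ c T := fun T hT => mul_nonneg (hC0 T hT) hS0
  -- pointwise bound
  have hpt : ∀ T : ℝ, 0 < T → ∀ t ∈ Icc (0:ℝ) T, ∀ v : V, ‖iVH v‖ ≤ n →
      ‖F t v‖ ≤ c T * (1 + ‖v‖) := by
    intro T hT t ht v hv
    have h1 := hgrowth T hT t ht v hv
    have hsum : (∑ j, (1 + nβ j v ^ (ρ j + 1))) ≤ S * (1 + ‖v‖) := by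
      rw [hS, Finset.sum_mul]
      refine Finset.sum_le_sum fun j _ => ?_
      obtain ⟨hβ1, hβ2⟩ := hβ j
      have hρj := hρ j
      have h2 : ‖iVH v‖ ^ (2 - 2 * β j) ≤ 1 + n := by
        calc ‖iVH v‖ ^ (2 - 2 * β j) ≤ 1 + ‖iVH v‖ :=
              haux _ _ (norm_nonneg _) (by linarith) (by linarith)
          _ ≤ 1 + n := by linarith
      have h3 : nβ j v ≤ (K * (1 + n)) * ‖v‖ ^ (2 * β j - 1) := by
        calc nβ j v ≤ K * ‖iVH v‖ ^ (2 - 2 * β j) * ‖v‖ ^ (2 * β j - 1) :=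
              hinterp j v
          _ ≤ (K * (1 + n)) * ‖v‖ ^ (2 * β j - 1) := by
              apply mul_le_mul_of_nonneg_right _ (Real.rpow_nonneg (norm_nonneg v) _)
              exact mul_le_mul_of_nonneg_left h2 hK.le
      have h4 : nβ j v ^ (ρ j + 1)
          ≤ ((K * (1 + n)) * ‖v‖ ^ (2 * β j - 1)) ^ (ρ j + 1) :=
        Real.rpow_le_rpow (hnβ0 j v) h3 (by linarith)
      have h5 : ((K * (1 + n)) * ‖v‖ ^ (2 * β j - 1)) ^ (ρ j + 1)
          = (K * (1 + n)) ^ (ρ j + 1) * ‖v‖ ^ ((2 * β j - 1) * (ρ j + 1)) := by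
        rw [Real.mul_rpow hKn (Real.rpow_nonneg (norm_nonneg v) _),
          ← Real.rpow_mul (norm_nonneg v)]
      have h7 : ‖v‖ ^ ((2 * β j - 1) * (ρ j + 1)) ≤ 1 + ‖v‖ :=
        haux _ _ (norm_nonneg v) (by nlinarith) (hsub j)
      have h8 : nβ j v ^ (ρ j + 1) ≤ (K * (1 + n)) ^ (ρ j + 1) * (1 + ‖v‖) := by
        rw [h5] at h4
        calc nβ j v ^ (ρ j + 1)
            ≤ (K * (1 + n)) ^ (ρ j + 1) * ‖v‖ ^ ((2 * β j - 1) * (ρ j + 1)) := h4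
          _ ≤ (K * (1 + n)) ^ (ρ j + 1) * (1 + ‖v‖) :=
              mul_le_mul_of_nonneg_left h7 (hMj j)
      have := hMj j
      have := norm_nonneg v
      nlinarith
    calc ‖F t v‖ ≤ C T * ∑ j, (1 + nβ j v ^ (ρ j + 1)) := h1
      _ ≤ C T * (S * (1 + ‖v‖)) := mul_le_mul_of_nonneg_left hsum (hC0 T hT)
      _ = c T * (1 + ‖v‖) := by rw [hc]; ring
  refine ⟨fun T => Real.sqrt 2 * c T * (1 + Real.sqrt T), ?_, ?_⟩
  · -- monotonicity
    intro a ha b hb hab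
    have hca : 0 ≤ c a := hc0 a ha
    have hcb : c a ≤ c b := mul_le_mul_of_nonneg_right (hCmono ha hb hab) hS0
    have hsab : Real.sqrt a ≤ Real.sqrt b := Real.sqrt_le_sqrt hab
    have h2 : (0:ℝ) ≤ Real.sqrt 2 := Real.sqrt_nonneg 2
    apply mul_le_mul
    · exact mul_le_mul_of_nonneg_left hcb h2
    · linarith
    · linarith [Real.sqrt_nonneg a]
    · exact mul_nonneg h2 (hc0 b hb)
  · intro T hT u hcont hbound hmu hIu hmF
    have hTle : (0:ℝ) ≤ T := hT.le
    -- pointwise squared bound on Ioc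
    have hfb : ∀ t ∈ Ioc (0:ℝ) T, ‖F t (u t)‖ ^ 2 ≤ 2 * (c T) ^ 2 * (1 + ‖u t‖ ^ 2) := by
      intro t ht
      have ht' : t ∈ Icc (0:ℝ) T := ⟨ht.1.le, ht.2⟩
      have h := hpt T hT t ht' (u t) (hbound t ht')
      have h0 : (0:ℝ) ≤ ‖F t (u t)‖ := norm_nonneg _
      have h2 := mul_self_le_mul_self h0 h
      nlinarith [sq_nonneg (c T), sq_nonneg (1 - ‖u t‖), norm_nonneg (u t), hc0 T hT]
    have hone : IntegrableOn (fun _ : ℝ => (1:ℝ)) (Ioc 0 T) :=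
      integrableOn_const measure_Ioc_lt_top.ne
    have hg : IntegrableOn (fun t => 2 * (c T) ^ 2 * (1 + ‖u t‖ ^ 2)) (Ioc 0 T) :=
      (hone.add hIu).const_mul _
    have hfm : AEStronglyMeasurable (fun t => ‖F t (u t)‖ ^ 2)
        (volume.restrict (Ioc 0 T)) := by
      have := hmF.norm
      exact this.pow 2
    have hf : IntegrableOn (fun t => ‖F t (u t)‖ ^ 2) (Ioc 0 T) := by
      refine hg.mono' hfm ?_
      filter_upwards [ae_restrict_mem measurableSet_Ioc] with t ht
      have := hfb t ht
      rw [Real.norm_eq_abs, abs_of_nonneg (by positivity)]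
      exact this
    refine ⟨hf, ?_⟩
    rw [intervalIntegral.integral_of_le hTle, intervalIntegral.integral_of_le hTle]
    set I : ℝ := ∫ t in Ioc (0:ℝ) T, ‖u t‖ ^ 2 with hI
    set J : ℝ := ∫ t in Ioc (0:ℝ) T, ‖F t (u t)‖ ^ 2 with hJ
    have hI0 : 0 ≤ I :=
      setIntegral_nonneg measurableSet_Ioc (fun t _ => by positivity)
    have hJ0 : 0 ≤ J :=
      setIntegral_nonneg measurableSet_Ioc (fun t _ => by positivity)
    have hgint : (∫ t in Ioc (0:ℝ) T, 2 * (c T) ^ 2 * (1 + ‖u t‖ ^ 2))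
        = 2 * (c T) ^ 2 * (T + I) := by
      rw [MeasureTheory.integral_const_mul, integral_add hone hIu, setIntegral_const,
        Real.volume_real_Ioc_of_le hTle, smul_eq_mul]
      rw [sub_zero]
      ring
    have hJle : J ≤ 2 * (c T) ^ 2 * (T + I) := by
      rw [hJ, ← hgint]
      exact setIntegral_mono_on hf hg measurableSet_Ioc hfb
    rw [← Real.sqrt_eq_rpow, ← Real.sqrt_eq_rpow]
    have hR0 : (0:ℝ) ≤ Real.sqrt 2 * c T * (1 + Real.sqrt T) * (1 + Real.sqrt I) := by
      have := hc0 T hT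
      positivity
    have hkey : T + I ≤ (1 + Real.sqrt T) ^ 2 * (1 + Real.sqrt I) ^ 2 := by
      nlinarith [Real.sqrt_nonneg T, Real.sqrt_nonneg I, Real.sq_sqrt hTle,
        Real.sq_sqrt hI0]
    have expand : (Real.sqrt 2 * c T * (1 + Real.sqrt T) * (1 + Real.sqrt I)) ^ 2
        = 2 * (c T) ^ 2 * ((1 + Real.sqrt T) ^ 2 * (1 + Real.sqrt I) ^ 2) := by
      have h2 : (Real.sqrt 2) ^ 2 = 2 := Real.sq_sqrt (by norm_num)
      rw [mul_pow, mul_pow, mul_pow, h2]; ring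
    calc Real.sqrt J
        ≤ Real.sqrt ((Real.sqrt 2 * c T * (1 + Real.sqrt T) * (1 + Real.sqrt I)) ^ 2) := by
          apply Real.sqrt_le_sqrt
          rw [expand]
          calc J ≤ 2 * (c T) ^ 2 * (T + I) := hJle
            _ ≤ 2 * (c T) ^ 2 * ((1 + Real.sqrt T) ^ 2 * (1 + Real.sqrt I) ^ 2) :=
              mul_le_mul_of_nonneg_left hkey (by positivity)
      _ = Real.sqrt 2 * c T * (1 + Real.sqrt T) * (1 + Real.sqrt I) :=
          Real.sqrt_sq hR0
end

section
/- Under the critical variational setting, for each σ > 0 there exists a constant C_{n,T,σ} non-decreasing in T such that for all u, v ∈ MR(0,T) with ‖u‖_{C([0,T];H)}, ‖v‖_{C([0,T];H)} ≤ n: ‖F(u) − F(v)‖²_{L²(0,T;V*)} ≤ C_{n,T,σ} ∫₀ᵀ (1 + ‖u(s)‖_V² + ‖v(s)‖_V²) ‖u(s) − v(s)‖_H² ds + σ C_{n,T}² ‖u − v‖²_{L²(0,T;V)}. -/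
set_option maxHeartbeats 1000000
open MeasureTheory Set

lemma young_split {θ : ℝ} (hθ0 : 0 < θ) (hθ1 : θ < 1) {ε : ℝ} (hε : 0 < ε) :
    ∃ D : ℝ, 0 ≤ D ∧ ∀ X Y : ℝ, 0 ≤ X → 0 ≤ Y →
      X ^ (1 - θ) * Y ^ θ ≤ D * X + ε * Y := by
  have h1θ : (0:ℝ) < 1 - θ := by linarith
  set μ : ℝ := ε / θ with hμdef
  have hμ : 0 < μ := div_pos hε hθ0
  set ν : ℝ := μ ^ (-(θ / (1 - θ))) with hνdef
  have hν : 0 < ν := Real.rpow_pos_of_pos hμ _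
  refine ⟨(1 - θ) * ν, by positivity, fun X Y hX hY => ?_⟩
  have key : ν ^ (1 - θ) * μ ^ θ = 1 := by
    rw [hνdef, ← Real.rpow_mul hμ.le, ← Real.rpow_add hμ]
    rw [show -(θ / (1 - θ)) * (1 - θ) + θ = 0 by field_simp; ring]
    exact Real.rpow_zero μ
  have e1 : X ^ (1 - θ) * Y ^ θ = (X * ν) ^ (1 - θ) * (Y * μ) ^ θ := by
    rw [Real.mul_rpow hX hν.le, Real.mul_rpow hY hμ.le]
    calc X ^ (1-θ) * Y ^ θ = X ^ (1-θ) * Y ^ θ * (ν ^ (1 - θ) * μ ^ θ) := by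
          rw [key, mul_one]
    _ = X ^ (1 - θ) * ν ^ (1 - θ) * (Y ^ θ * μ ^ θ) := by ring
  rw [e1]
  calc (X * ν) ^ (1 - θ) * (Y * μ) ^ θ ≤ (1 - θ) * (X * ν) + θ * (Y * μ) :=
        Real.geom_mean_le_arith_mean2_weighted h1θ.le hθ0.le (by positivity) (by positivity)
          (by ring)
    _ = (1 - θ) * ν * X + ε * Y := by
        rw [hμdef]; field_simp

lemma perj_split {θ ρ K n ε : ℝ} (hθ0 : 0 < θ) (hθ1 : θ < 1) (hρ : 0 ≤ ρ)
    (hsub : θ * (ρ + 1) ≤ 1) (hK : 0 < K) (hn : 0 ≤ n) (hε : 0 < ε) :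
    ∃ D : ℝ, 0 ≤ D ∧ ∀ a b h d nu nv nd : ℝ,
      0 ≤ a → 0 ≤ b → 0 ≤ h → 0 ≤ d → 0 ≤ nu → 0 ≤ nv → 0 ≤ nd →
      nu ≤ K * n ^ (1 - θ) * a ^ θ → nv ≤ K * n ^ (1 - θ) * b ^ θ →
      nd ≤ K * h ^ (1 - θ) * d ^ θ →
      ((1 + nu ^ ρ + nv ^ ρ) * nd) ^ 2
        ≤ D * ((1 + a ^ 2 + b ^ 2) * h ^ 2) + ε * d ^ 2 := by
  have h1θ : (0:ℝ) < 1 - θ := by linarith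
  have hθρ : θ * ρ ≤ 1 - θ := by nlinarith
  obtain ⟨D', hD'0, hD'⟩ := young_split hθ0 hθ1 (div_pos hε (by positivity : (0:ℝ) < K ^ 2))
  set c : ℝ := K * n ^ (1 - θ) with hcdef
  have hc : 0 ≤ c := by positivity
  set M : ℝ := 1 + 2 * c ^ ρ with hMdef
  have hcρ : 0 ≤ c ^ ρ := Real.rpow_nonneg hc ρ
  have hM0 : 0 ≤ M := by rw [hMdef]; linarith
  refine ⟨K ^ 2 * D' * M ^ (2 / (1 - θ)), by positivity, ?_⟩
  intro a b h d nu nv nd ha hb hh hd hnu0 hnv0 hnd0 hnu hnv hnd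
  set S : ℝ := 1 + a ^ 2 + b ^ 2 with hSdef
  have hS1 : 1 ≤ S := by rw [hSdef]; nlinarith [sq_nonneg a, sq_nonneg b]
  have hS0 : 0 < S := by linarith
  set P : ℝ := 1 + nu ^ ρ + nv ^ ρ with hPdef
  have hnuρ : 0 ≤ nu ^ ρ := Real.rpow_nonneg hnu0 ρ
  have hnvρ : 0 ≤ nv ^ ρ := Real.rpow_nonneg hnv0 ρ
  have hP0 : 0 ≤ P := by rw [hPdef]; linarith
  -- bound on `x ^ (θ * ρ)` for `x ∈ {a, b}`
  have hpow : ∀ x : ℝ, 0 ≤ x → x ^ 2 ≤ S - 1 → x ^ (θ * ρ) ≤ S ^ ((1 - θ) / 2) := by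
    intro x hx hxS
    have h1 : x ≤ S ^ ((1:ℝ) / 2) := by
      have e : x = (x ^ ((2:ℝ))) ^ ((1:ℝ) / 2) := by
        rw [← Real.rpow_mul hx]; norm_num
      rw [e]
      apply Real.rpow_le_rpow (by positivity) _ (by norm_num)
      rw [Real.rpow_two]
      nlinarith
    calc x ^ (θ * ρ) ≤ (S ^ ((1:ℝ)/2)) ^ (θ * ρ) :=
          Real.rpow_le_rpow hx h1 (by positivity)
      _ = S ^ ((1/2) * (θ * ρ)) := by rw [← Real.rpow_mul hS0.le]
      _ ≤ S ^ ((1 - θ) / 2) := Real.rpow_le_rpow_of_exponent_le hS1 (by linarith)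
  -- Step A : P ≤ M * S ^ ((1-θ)/2)
  have hnux : nu ^ ρ ≤ c ^ ρ * a ^ (θ * ρ) := by
    calc nu ^ ρ ≤ (c * a ^ θ) ^ ρ := Real.rpow_le_rpow hnu0 hnu hρ
      _ = c ^ ρ * (a ^ θ) ^ ρ := Real.mul_rpow hc (Real.rpow_nonneg ha θ)
      _ = c ^ ρ * a ^ (θ * ρ) := by rw [← Real.rpow_mul ha]
  have hnvx : nv ^ ρ ≤ c ^ ρ * b ^ (θ * ρ) := by
    calc nv ^ ρ ≤ (c * b ^ θ) ^ ρ := Real.rpow_le_rpow hnv0 hnv hρ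
      _ = c ^ ρ * (b ^ θ) ^ ρ := Real.mul_rpow hc (Real.rpow_nonneg hb θ)
      _ = c ^ ρ * b ^ (θ * ρ) := by rw [← Real.rpow_mul hb]
  have hSexp1 : (1:ℝ) ≤ S ^ ((1 - θ) / 2) := Real.one_le_rpow hS1 (by positivity)
  have hStepA : P ≤ M * S ^ ((1 - θ) / 2) := by
    have h1 := hpow a ha (by rw [hSdef]; nlinarith [sq_nonneg b])
    have h2 := hpow b hb (by rw [hSdef]; nlinarith [sq_nonneg a])
    have h3 : nu ^ ρ ≤ c ^ ρ * S ^ ((1 - θ) / 2) :=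
      hnux.trans (mul_le_mul_of_nonneg_left h1 hcρ)
    have h4 : nv ^ ρ ≤ c ^ ρ * S ^ ((1 - θ) / 2) :=
      hnvx.trans (mul_le_mul_of_nonneg_left h2 hcρ)
    have hMe : M * S ^ ((1 - θ) / 2)
        = S ^ ((1 - θ) / 2) + (c ^ ρ * S ^ ((1 - θ) / 2) + c ^ ρ * S ^ ((1 - θ) / 2)) := by
      rw [hMdef]; ring
    rw [hPdef, hMe]
    linarith
  -- Step B : rewrite the square as X^(1-θ) * Y^θ
  set X : ℝ := P ^ (2 / (1 - θ)) * h ^ 2 with hXdef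
  set Y : ℝ := d ^ 2 with hYdef
  have hX0 : 0 ≤ X := by positivity
  have hY0 : 0 ≤ Y := by positivity
  have hsq : ((1 + nu ^ ρ + nv ^ ρ) * nd) ^ 2 ≤ K ^ 2 * (X ^ (1 - θ) * Y ^ θ) := by
    have h1 : (1 + nu ^ ρ + nv ^ ρ) * nd ≤ P * (K * h ^ (1 - θ) * d ^ θ) := by
      rw [← hPdef]
      exact mul_le_mul_of_nonneg_left hnd hP0
    have h2 : ((1 + nu ^ ρ + nv ^ ρ) * nd) ^ 2 ≤ (P * (K * h ^ (1 - θ) * d ^ θ)) ^ 2 := by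
      apply pow_le_pow_left₀ (by positivity) _ 2
      rw [← hPdef] at h1 ⊢
      exact h1
    refine h2.trans_eq ?_
    have eP : (P ^ (2 / (1 - θ))) ^ (1 - θ) = P ^ 2 := by
      rw [← Real.rpow_mul hP0, div_mul_cancel₀, Real.rpow_two]
      exact ne_of_gt h1θ
    have eh : (h ^ (1 - θ)) ^ 2 = (h ^ 2) ^ (1 - θ) := by
      rw [← Real.rpow_two, ← Real.rpow_two, ← Real.rpow_mul hh, ← Real.rpow_mul hh,
        mul_comm]
    have ed : (d ^ θ) ^ 2 = (d ^ 2) ^ θ := by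
      rw [← Real.rpow_two, ← Real.rpow_two, ← Real.rpow_mul hd, ← Real.rpow_mul hd,
        mul_comm]
    rw [hXdef, hYdef, Real.mul_rpow (by positivity) (by positivity), eP, ← eh, ← ed]
    ring
  -- Step D : X ≤ M ^ (2/(1-θ)) * (S * h^2)
  have hXle : X ≤ M ^ (2 / (1 - θ)) * (S * h ^ 2) := by
    have h1 : P ^ (2 / (1 - θ)) ≤ (M * S ^ ((1 - θ) / 2)) ^ (2 / (1 - θ)) :=
      Real.rpow_le_rpow hP0 hStepA (by positivity)
    have h2 : (M * S ^ ((1 - θ) / 2)) ^ (2 / (1 - θ))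
        = M ^ (2 / (1 - θ)) * S := by
      rw [Real.mul_rpow hM0 (Real.rpow_nonneg hS0.le _), ← Real.rpow_mul hS0.le]
      rw [show (1 - θ) / 2 * (2 / (1 - θ)) = 1 by field_simp]
      rw [Real.rpow_one]
    rw [hXdef]
    calc P ^ (2 / (1 - θ)) * h ^ 2 ≤ (M ^ (2 / (1 - θ)) * S) * h ^ 2 := by
          apply mul_le_mul_of_nonneg_right _ (by positivity)
          rw [← h2]; exact h1
      _ = M ^ (2 / (1 - θ)) * (S * h ^ 2) := by ring
  -- combine
  have hyoung := hD' X Y hX0 hY0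
  calc ((1 + nu ^ ρ + nv ^ ρ) * nd) ^ 2 ≤ K ^ 2 * (X ^ (1 - θ) * Y ^ θ) := hsq
    _ ≤ K ^ 2 * (D' * X + ε / K ^ 2 * Y) := by
        apply mul_le_mul_of_nonneg_left hyoung (by positivity)
    _ = K ^ 2 * D' * X + ε * Y := by field_simp
    _ ≤ K ^ 2 * D' * (M ^ (2 / (1 - θ)) * (S * h ^ 2)) + ε * Y := by
        have := mul_le_mul_of_nonneg_left hXle (by positivity : (0:ℝ) ≤ K ^ 2 * D')
        linarith
    _ = K ^ 2 * D' * M ^ (2 / (1 - θ)) * ((1 + a ^ 2 + b ^ 2) * h ^ 2) + ε * d ^ 2 := by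
        rw [hYdef, hSdef]; ring


/-- Lemma 3.4(v) of the paper: the `L²`-Lipschitz estimate for the semilinear
part `F`, with an arbitrarily small multiple `σ` of the `L²(0,T;V)`-norm of the
difference. -/
theorem F_lipschitz_L2_estimate
    {V H Vs : Type*}
    [NormedAddCommGroup V] [NormedSpace ℝ V]
    [NormedAddCommGroup H] [NormedSpace ℝ H]
    [NormedAddCommGroup Vs] [NormedSpace ℝ Vs]
    (iVH : V →L[ℝ] H)
    (m : ℕ) (β ρ : Fin m → ℝ) (K : ℝ) (hK : 0 < K)
    (hβ : ∀ j, β j ∈ Ioo (1/2 : ℝ) 1) (hρ : ∀ j, 0 ≤ ρ j)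
    (hsub : ∀ j, (2 * β j - 1) * (ρ j + 1) ≤ 1)
    (nβ : Fin m → V → ℝ) (hnβ0 : ∀ j v, 0 ≤ nβ j v)
    (hinterp : ∀ j (v : V),
      nβ j v ≤ K * ‖iVH v‖ ^ (2 - 2 * β j) * ‖v‖ ^ (2 * β j - 1))
    (F : ℝ → V → Vs) (n : ℝ) (hn : 0 ≤ n)
    (C : ℝ → ℝ) (hC0 : ∀ T : ℝ, 0 < T → 0 ≤ C T) (hCmono : MonotoneOn C (Ioi 0))
    (hLip : ∀ T : ℝ, 0 < T → ∀ t ∈ Icc (0:ℝ) T, ∀ u v : V,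
      ‖iVH u‖ ≤ n → ‖iVH v‖ ≤ n →
      ‖F t u - F t v‖
        ≤ C T * ∑ j, (1 + nβ j u ^ ρ j + nβ j v ^ ρ j) * nβ j (u - v)) :
    ∀ σ : ℝ, 0 < σ →
      ∃ Cσ : ℝ → ℝ, MonotoneOn Cσ (Ioi 0) ∧
        ∀ T : ℝ, 0 < T → ∀ u v : ℝ → V,
          ContinuousOn (fun t => iVH (u t)) (Icc 0 T) →
          ContinuousOn (fun t => iVH (v t)) (Icc 0 T) →
          (∀ t ∈ Icc (0:ℝ) T, ‖iVH (u t)‖ ≤ n) →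
          (∀ t ∈ Icc (0:ℝ) T, ‖iVH (v t)‖ ≤ n) →
          AEStronglyMeasurable u (volume.restrict (Ioc 0 T)) →
          AEStronglyMeasurable v (volume.restrict (Ioc 0 T)) →
          IntegrableOn (fun t => ‖u t‖ ^ 2) (Ioc 0 T) →
          IntegrableOn (fun t => ‖v t‖ ^ 2) (Ioc 0 T) →
          AEStronglyMeasurable (fun t => F t (u t) - F t (v t))
            (volume.restrict (Ioc 0 T)) →
          (∫ t in (0:ℝ)..T, ‖F t (u t) - F t (v t)‖ ^ 2)
            ≤ Cσ T * (∫ t in (0:ℝ)..T,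
                (1 + ‖u t‖ ^ 2 + ‖v t‖ ^ 2) * ‖iVH (u t - v t)‖ ^ 2)
              + σ * (C T) ^ 2 * ∫ t in (0:ℝ)..T, ‖u t - v t‖ ^ 2 := by

  intro σ hσ
  have hm1 : (0:ℝ) < (m:ℝ) ^ 2 + 1 := by positivity
  have hεpos : (0:ℝ) < σ / ((m:ℝ) ^ 2 + 1) := by positivity
  have hθ0 : ∀ j, (0:ℝ) < 2 * β j - 1 := fun j => by have := (hβ j).1; linarith
  have hθ1 : ∀ j, 2 * β j - 1 < 1 := fun j => by have := (hβ j).2; linarith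
  choose D hD0 hDj using fun j : Fin m =>
    perj_split (hθ0 j) (hθ1 j) (hρ j) (hsub j) hK hn hεpos
  have hDsum : (0:ℝ) ≤ ∑ j, D j := Finset.sum_nonneg fun j _ => hD0 j
  refine ⟨fun T => ((m:ℝ) * ∑ j, D j) * C T ^ 2, ?_, ?_⟩
  · intro x hx y hy hxy
    have h1 : 0 ≤ C x := hC0 x hx
    have h2 : C x ≤ C y := hCmono hx hy hxy
    have : C x ^ 2 ≤ C y ^ 2 := by nlinarith
    exact mul_le_mul_of_nonneg_left this (by positivity)
  intro T hT u v hcu hcv hbu hbv hu hv hiu hiv hF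
  -- the pointwise estimate
  have key : ∀ t ∈ Icc (0:ℝ) T,
      ‖F t (u t) - F t (v t)‖ ^ 2
        ≤ ((m:ℝ) * ∑ j, D j) * C T ^ 2
            * ((1 + ‖u t‖ ^ 2 + ‖v t‖ ^ 2) * ‖iVH (u t - v t)‖ ^ 2)
          + σ * C T ^ 2 * ‖u t - v t‖ ^ 2 := by
    intro t ht
    have hL := hLip T hT t ht (u t) (v t) (hbu t ht) (hbv t ht)
    have hterm : ∀ j : Fin m,
        ((1 + nβ j (u t) ^ ρ j + nβ j (v t) ^ ρ j) * nβ j (u t - v t)) ^ 2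
          ≤ D j * ((1 + ‖u t‖ ^ 2 + ‖v t‖ ^ 2) * ‖iVH (u t - v t)‖ ^ 2)
            + σ / ((m:ℝ) ^ 2 + 1) * ‖u t - v t‖ ^ 2 := by
      intro j
      have he : (1:ℝ) - (2 * β j - 1) = 2 - 2 * β j := by ring
      have hexp : (0:ℝ) ≤ 2 - 2 * β j := by have := (hβ j).2; linarith
      have hnu : nβ j (u t)
          ≤ K * n ^ (1 - (2 * β j - 1)) * ‖u t‖ ^ (2 * β j - 1) := by
        rw [he]
        refine (hinterp j (u t)).trans ?_
        have hx : ‖iVH (u t)‖ ^ (2 - 2 * β j) ≤ n ^ (2 - 2 * β j) :=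
          Real.rpow_le_rpow (norm_nonneg _) (hbu t ht) hexp
        exact mul_le_mul_of_nonneg_right
          (mul_le_mul_of_nonneg_left hx hK.le) (Real.rpow_nonneg (norm_nonneg _) _)
      have hnv : nβ j (v t)
          ≤ K * n ^ (1 - (2 * β j - 1)) * ‖v t‖ ^ (2 * β j - 1) := by
        rw [he]
        refine (hinterp j (v t)).trans ?_
        have hx : ‖iVH (v t)‖ ^ (2 - 2 * β j) ≤ n ^ (2 - 2 * β j) :=
          Real.rpow_le_rpow (norm_nonneg _) (hbv t ht) hexp
        exact mul_le_mul_of_nonneg_right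
          (mul_le_mul_of_nonneg_left hx hK.le) (Real.rpow_nonneg (norm_nonneg _) _)
      have hnd : nβ j (u t - v t)
          ≤ K * ‖iVH (u t - v t)‖ ^ (1 - (2 * β j - 1))
              * ‖u t - v t‖ ^ (2 * β j - 1) := by
        rw [he]; exact hinterp j (u t - v t)
      exact hDj j ‖u t‖ ‖v t‖ ‖iVH (u t - v t)‖ ‖u t - v t‖
        (nβ j (u t)) (nβ j (v t)) (nβ j (u t - v t))
        (norm_nonneg _) (norm_nonneg _) (norm_nonneg _) (norm_nonneg _)
        (hnβ0 j _) (hnβ0 j _) (hnβ0 j _) hnu hnv hnd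
    set G1 : ℝ := (1 + ‖u t‖ ^ 2 + ‖v t‖ ^ 2) * ‖iVH (u t - v t)‖ ^ 2 with hG1
    set G2 : ℝ := ‖u t - v t‖ ^ 2 with hG2
    have hG10 : 0 ≤ G1 := by rw [hG1]; positivity
    have hG20 : 0 ≤ G2 := by rw [hG2]; positivity
    have hCS : (∑ j, (1 + nβ j (u t) ^ ρ j + nβ j (v t) ^ ρ j) * nβ j (u t - v t)) ^ 2
        ≤ (m:ℝ) * ∑ j, ((1 + nβ j (u t) ^ ρ j + nβ j (v t) ^ ρ j) * nβ j (u t - v t)) ^ 2 := by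
      simpa using sq_sum_le_card_mul_sum_sq
        (s := (Finset.univ : Finset (Fin m)))
        (f := fun j => (1 + nβ j (u t) ^ ρ j + nβ j (v t) ^ ρ j) * nβ j (u t - v t))
    have hsum : ∑ j, ((1 + nβ j (u t) ^ ρ j + nβ j (v t) ^ ρ j) * nβ j (u t - v t)) ^ 2
        ≤ (∑ j, D j) * G1 + (m:ℝ) * (σ / ((m:ℝ) ^ 2 + 1)) * G2 := by
      calc ∑ j, ((1 + nβ j (u t) ^ ρ j + nβ j (v t) ^ ρ j) * nβ j (u t - v t)) ^ 2
          ≤ ∑ j : Fin m, (D j * G1 + σ / ((m:ℝ) ^ 2 + 1) * G2) :=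
            Finset.sum_le_sum fun j _ => hterm j
        _ = (∑ j, D j) * G1 + (m:ℝ) * (σ / ((m:ℝ) ^ 2 + 1)) * G2 := by
            rw [Finset.sum_add_distrib, ← Finset.sum_mul, Finset.sum_const,
              Finset.card_univ, Fintype.card_fin, nsmul_eq_mul]
            ring
    have hmε : (m:ℝ) ^ 2 * (σ / ((m:ℝ) ^ 2 + 1)) ≤ σ := by
      rw [show (m:ℝ) ^ 2 * (σ / ((m:ℝ) ^ 2 + 1)) = (m:ℝ) ^ 2 * σ / ((m:ℝ) ^ 2 + 1) by ring,
        div_le_iff₀ hm1]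
      nlinarith [sq_nonneg (m:ℝ)]
    have hnn : (0:ℝ) ≤ ∑ j, (1 + nβ j (u t) ^ ρ j + nβ j (v t) ^ ρ j) * nβ j (u t - v t) :=
      Finset.sum_nonneg fun j _ => mul_nonneg
        (by have h1 := Real.rpow_nonneg (hnβ0 j (u t)) (ρ j)
            have h2 := Real.rpow_nonneg (hnβ0 j (v t)) (ρ j); linarith)
        (hnβ0 j _)
    calc ‖F t (u t) - F t (v t)‖ ^ 2
        ≤ (C T * ∑ j, (1 + nβ j (u t) ^ ρ j + nβ j (v t) ^ ρ j) * nβ j (u t - v t)) ^ 2 :=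
          pow_le_pow_left₀ (norm_nonneg _) hL 2
      _ = C T ^ 2 * (∑ j, (1 + nβ j (u t) ^ ρ j + nβ j (v t) ^ ρ j) * nβ j (u t - v t)) ^ 2 :=
          mul_pow _ _ 2
      _ ≤ C T ^ 2 * ((m:ℝ) * ∑ j, ((1 + nβ j (u t) ^ ρ j + nβ j (v t) ^ ρ j)
            * nβ j (u t - v t)) ^ 2) :=
          mul_le_mul_of_nonneg_left hCS (by positivity)
      _ ≤ C T ^ 2 * ((m:ℝ) * ((∑ j, D j) * G1 + (m:ℝ) * (σ / ((m:ℝ) ^ 2 + 1)) * G2)) := by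
          apply mul_le_mul_of_nonneg_left _ (by positivity)
          exact mul_le_mul_of_nonneg_left hsum (by positivity)
      _ = ((m:ℝ) * ∑ j, D j) * C T ^ 2 * G1
            + ((m:ℝ) ^ 2 * (σ / ((m:ℝ) ^ 2 + 1))) * (C T ^ 2 * G2) := by ring
      _ ≤ ((m:ℝ) * ∑ j, D j) * C T ^ 2 * G1 + σ * (C T ^ 2 * G2) := by
          have := mul_le_mul_of_nonneg_right hmε
            (show (0:ℝ) ≤ C T ^ 2 * G2 by positivity)
          linarith
      _ = ((m:ℝ) * ∑ j, D j) * C T ^ 2 * G1 + σ * C T ^ 2 * G2 := by ring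
  -- now the integration step
  have hdm : AEStronglyMeasurable (fun t => u t - v t) (volume.restrict (Ioc 0 T)) :=
    hu.sub hv
  have hhm : AEStronglyMeasurable (fun t => ‖iVH (u t - v t)‖)
      (volume.restrict (Ioc 0 T)) :=
    (iVH.continuous.comp_aestronglyMeasurable hdm).norm
  have hSm : AEStronglyMeasurable (fun t => 1 + ‖u t‖ ^ 2 + ‖v t‖ ^ 2)
      (volume.restrict (Ioc 0 T)) :=
    (aestronglyMeasurable_const.add (hu.norm.pow 2)).add (hv.norm.pow 2)
  have hSint : IntegrableOn (fun t => 1 + ‖u t‖ ^ 2 + ‖v t‖ ^ 2) (Ioc 0 T) := by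
    refine Integrable.add (Integrable.add ?_ hiu) hiv
    exact integrableOn_const measure_Ioc_lt_top.ne enorm_ne_top
  have hg1m : AEStronglyMeasurable
      (fun t => (1 + ‖u t‖ ^ 2 + ‖v t‖ ^ 2) * ‖iVH (u t - v t)‖ ^ 2)
      (volume.restrict (Ioc 0 T)) := hSm.mul (hhm.pow 2)
  have hg1int : IntegrableOn
      (fun t => (1 + ‖u t‖ ^ 2 + ‖v t‖ ^ 2) * ‖iVH (u t - v t)‖ ^ 2) (Ioc 0 T) := by
    refine Integrable.mono' (hSint.const_mul ((2 * n) ^ 2)) hg1m ?_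
    filter_upwards [ae_restrict_mem measurableSet_Ioc] with t ht
    have ht' : t ∈ Icc (0:ℝ) T := Ioc_subset_Icc_self ht
    have hb : ‖iVH (u t - v t)‖ ≤ 2 * n := by
      rw [map_sub]
      calc ‖iVH (u t) - iVH (v t)‖ ≤ ‖iVH (u t)‖ + ‖iVH (v t)‖ := norm_sub_le _ _
        _ ≤ 2 * n := by have := hbu t ht'; have := hbv t ht'; linarith
    rw [Real.norm_of_nonneg (by positivity)]
    have h1 : ‖iVH (u t - v t)‖ ^ 2 ≤ (2 * n) ^ 2 :=
      pow_le_pow_left₀ (norm_nonneg _) hb 2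
    nlinarith [norm_nonneg (u t), norm_nonneg (v t), sq_nonneg ‖u t‖, sq_nonneg ‖v t‖,
      norm_nonneg (iVH (u t - v t))]
  have hg2m : AEStronglyMeasurable (fun t => ‖u t - v t‖ ^ 2)
      (volume.restrict (Ioc 0 T)) := hdm.norm.pow 2
  have hg2int : IntegrableOn (fun t => ‖u t - v t‖ ^ 2) (Ioc 0 T) := by
    refine Integrable.mono' ((hiu.const_mul 2).add (hiv.const_mul 2)) hg2m ?_
    filter_upwards with t
    simp only [Pi.add_apply]
    rw [Real.norm_of_nonneg (by positivity)]
    have h1 : ‖u t - v t‖ ≤ ‖u t‖ + ‖v t‖ := norm_sub_le _ _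
    nlinarith [mul_self_le_mul_self (norm_nonneg (u t - v t)) h1,
      sq_nonneg (‖u t‖ - ‖v t‖), norm_nonneg (u t - v t)]
  set Cσ' : ℝ := ((m:ℝ) * ∑ j, D j) * C T ^ 2 with hCσ'
  have hCσ'0 : 0 ≤ Cσ' := by rw [hCσ']; positivity
  have hgtotint : Integrable
      (fun t => Cσ' * ((1 + ‖u t‖ ^ 2 + ‖v t‖ ^ 2) * ‖iVH (u t - v t)‖ ^ 2)
        + σ * C T ^ 2 * ‖u t - v t‖ ^ 2) (volume.restrict (Ioc 0 T)) :=
    (hg1int.const_mul _).add (hg2int.const_mul _)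
  have hfle : ∀ᵐ t ∂(volume.restrict (Ioc 0 T)),
      ‖F t (u t) - F t (v t)‖ ^ 2
        ≤ Cσ' * ((1 + ‖u t‖ ^ 2 + ‖v t‖ ^ 2) * ‖iVH (u t - v t)‖ ^ 2)
          + σ * C T ^ 2 * ‖u t - v t‖ ^ 2 := by
    filter_upwards [ae_restrict_mem measurableSet_Ioc] with t ht
    exact key t (Ioc_subset_Icc_self ht)
  have hfint : Integrable (fun t => ‖F t (u t) - F t (v t)‖ ^ 2)
      (volume.restrict (Ioc 0 T)) := by
    refine Integrable.mono' hgtotint (hF.norm.pow 2) ?_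
    filter_upwards [hfle] with t htle
    rwa [Real.norm_of_nonneg (by positivity)]
  have hle := integral_mono_ae hfint hgtotint hfle
  rw [integral_add (hg1int.const_mul _) (hg2int.const_mul _),
    integral_const_mul, integral_const_mul] at hle
  rw [intervalIntegral.integral_of_le hT.le, intervalIntegral.integral_of_le hT.le,
    intervalIntegral.integral_of_le hT.le]
  exact hle
end
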